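/- Suppose A ⊆ ℕ is an oracle and there exists a total computable function g such that for every f ≤_T A there is a (D,g)-trace tracing f. Then A is of hyperimmune-free degree and A is not DNR. -/

import Mathlib

open Filter

namespace CichonAnalog

/-! ### Oracle computability -/

/-- Partial functions `ℕ →. ℕ` partial recursive relative to the oracle `A ⊆ ℕ`.
This is Mathlib's `Nat.Partrec` with an extra base case for the characteristic
function of the oracle. -/
inductive RecursiveIn (A : Set ℕ) : (ℕ →. ℕ) → Prop
  | zero : RecursiveIn A (pure 0)
  | succ : RecursiveIn A ↑Nat.succ
  | left : RecursiveIn A ↑fun n : ℕ => n.unpair.1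
  | right : RecursiveIn A ↑fun n : ℕ => n.unpair.2
  | oracle : RecursiveIn A ↑fun n : ℕ => A.indicator (fun _ => 1) n
  | pair {f g} : RecursiveIn A f → RecursiveIn A g →
      RecursiveIn A fun n => Nat.pair <$> f n <*> g n
  | comp {f g} : RecursiveIn A f → RecursiveIn A g →
      RecursiveIn A fun n => g n >>= f
  | prec {f g} : RecursiveIn A f → RecursiveIn A g →
      RecursiveIn A (Nat.unpaired fun a n =>
        n.rec (f a) fun y IH => do let i ← IH; g (Nat.pair a (Nat.pair y i)))
  | rfind {f} : RecursiveIn A f →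
      RecursiveIn A fun a => Nat.rfind fun n => (fun m => m = 0) <$> f (Nat.pair a n)

/-- The partial function `f` (between coded spaces) is partial recursive in the oracle `A`. -/
def PartrecIn (A : Set ℕ) {α σ : Type} [Primcodable α] [Primcodable σ] (f : α →. σ) : Prop :=
  RecursiveIn A fun n =>
    Part.bind ↑(Encodable.decode (α := α) n) fun a => (f a).map Encodable.encode

/-- `f ≤_T A` : the (total) function `f` is computable from the oracle `A`. -/
def ComputableIn (A : Set ℕ) {α σ : Type} [Primcodable α] [Primcodable σ] (f : α → σ) : Prop :=
  PartrecIn A (f : α →. σ)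

/-- `W` is computably enumerable in the oracle `A`. -/
def CEIn (A : Set ℕ) {α : Type} [Primcodable α] (W : Set α) : Prop :=
  ∃ f : α →. ℕ, PartrecIn A f ∧ ∀ a, a ∈ W ↔ (f a).Dom

/-- `W` is computably enumerable (unrelativized). -/
def CE {α : Type} [Primcodable α] (W : Set α) : Prop :=
  ∃ f : α →. ℕ, Partrec f ∧ ∀ a, a ∈ W ↔ (f a).Dom

/-! ### Cantor space, `Π⁰₁` classes, effective meagerness -/

/-- The basic clopen set (cylinder) of the finite binary string `σ` in Cantor space. -/
def Cyl (σ : List Bool) : Set (ℕ → Bool) :=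
  {x | ∀ i, i < σ.length → x i = σ.getD i false}

/-- `P` is a `Π⁰₁(A)` class: a closed subset of Cantor space whose complement is the
union of basic clopen sets over a set of strings c.e. in `A`. -/
def Pi01In (A : Set ℕ) (P : Set (ℕ → Bool)) : Prop :=
  ∃ W : Set (List Bool), CEIn A W ∧ P = (⋃ σ ∈ W, Cyl σ)ᶜ

/-- `P` is a (plain) `Π⁰₁` class. -/
def Pi01 (P : Set (ℕ → Bool)) : Prop :=
  ∃ W : Set (List Bool), CE W ∧ P = (⋃ σ ∈ W, Cyl σ)ᶜ

/-- `C` is a uniformly `Π⁰₁(A)` sequence of classes. -/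
def UnifPi01In (A : Set ℕ) (C : ℕ → Set (ℕ → Bool)) : Prop :=
  ∃ W : Set (ℕ × List Bool), CEIn A W ∧
    ∀ m, C m = (⋃ σ ∈ {s | (m, s) ∈ W}, Cyl σ)ᶜ

/-- `C` is a uniformly `Π⁰₁` sequence of classes. -/
def UnifPi01 (C : ℕ → Set (ℕ → Bool)) : Prop :=
  ∃ W : Set (ℕ × List Bool), CE W ∧
    ∀ m, C m = (⋃ σ ∈ {s | (m, s) ∈ W}, Cyl σ)ᶜ

/-- `S` is effectively meager relative to `A`: it is contained in the union of a
uniformly `Π⁰₁(A)` sequence of nowhere dense classes. -/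
def EffMeagerIn (A : Set ℕ) (S : Set (ℕ → Bool)) : Prop :=
  ∃ C : ℕ → Set (ℕ → Bool), UnifPi01In A C ∧ (∀ m, IsNowhereDense (C m)) ∧ S ⊆ ⋃ m, C m

/-- `S` is effectively meager (unrelativized). -/
def EffMeager (S : Set (ℕ → Bool)) : Prop :=
  ∃ C : ℕ → Set (ℕ → Bool), UnifPi01 C ∧ (∀ m, IsNowhereDense (C m)) ∧ S ⊆ ⋃ m, C m

/-- `A` is meager engulfing: some `A`-effectively meager set contains every
effectively meager set. -/
def MeagerEngulfing (A : Set ℕ) : Prop :=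
  ∃ S, EffMeagerIn A S ∧ ∀ T, EffMeager T → T ⊆ S

/-- `A` is weakly meager engulfing: some `A`-effectively meager set contains every
computable element of Cantor space. -/
def WeaklyMeagerEngulfing (A : Set ℕ) : Prop :=
  ∃ S, EffMeagerIn A S ∧ ∀ x : ℕ → Bool, Computable x → x ∈ S

/-- `V` is a computable set of finite binary strings. -/
def ComputableStringSet (V : Set (List Bool)) : Prop :=
  ∃ χ : List Bool → Bool, Computable χ ∧ ∀ s, s ∈ V ↔ χ s = true

/-- `V` is a dense set of finite binary strings: every string has an extension in `V`. -/
def DenseStringSet (V : Set (List Bool)) : Prop :=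
  ∀ σ : List Bool, ∃ τ ∈ V, σ <+: τ

/-- `x ∈ 2^ω` is weakly 1-generic: for every computable dense set `V` of finite
binary strings, some initial segment of `x` lies in `V`. -/
def Weakly1Generic (x : ℕ → Bool) : Prop :=
  ∀ V : Set (List Bool), ComputableStringSet V → DenseStringSet V →
    ∃ n, (List.ofFn fun i : Fin n => x i) ∈ V

/-! ### Domination properties -/

/-- `A` is high: `A` computes a function dominating every total computable function. -/
def High (A : Set ℕ) : Prop :=
  ∃ f : ℕ → ℕ, ComputableIn A f ∧
    ∀ g : ℕ → ℕ, Computable g → ∀ᶠ n in atTop, g n ≤ f n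

/-- `A` is of hyperimmune degree: `A` computes a function not dominated by any
computable function. -/
def HyperimmuneDegree (A : Set ℕ) : Prop :=
  ∃ f : ℕ → ℕ, ComputableIn A f ∧
    ∀ g : ℕ → ℕ, Computable g → ∃ᶠ n in atTop, g n < f n

/-- `A` is of hyperimmune-free degree: every function computable in `A` is dominated
by a total computable function. -/
def HyperimmuneFree (A : Set ℕ) : Prop :=
  ∀ f : ℕ → ℕ, ComputableIn A f →
    ∃ g : ℕ → ℕ, Computable g ∧ ∀ᶠ n in atTop, f n ≤ g n

/-! ### Measure on Cantor space, Kurtz and Schnorr tests -/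

open scoped Classical in
/-- The uniform measure of the clopen set `⋃ σ ∈ F, [σ]` determined by the finite
list `F` of binary strings: count the binary strings of maximal length extending
some member of `F`, and normalize. -/
noncomputable def listMeasure (F : List (List Bool)) : ℚ :=
  letI k := (F.map List.length).foldr max 0
  ((Finset.univ.filter fun v : Fin k → Bool =>
      ∃ σ ∈ F, σ <+: List.ofFn v).card : ℚ) / 2 ^ k

/-- The clopen subset of Cantor space given explicitly as a finite union of
basic clopen sets. -/
def ClopSet (F : List (List Bool)) : Set (ℕ → Bool) := ⋃ σ ∈ F, Cyl σ

/-- The effectively open subset of Cantor space enumerated by the sequence of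
finite stages `g`. -/
def OpenSet (g : ℕ → List (List Bool)) : Set (ℕ → Bool) := ⋃ s, ClopSet (g s)

/-- The measure of the open set enumerated by the stages `g`: the supremum of the
measures of its finite partial unions. -/
noncomputable def openMeasure (g : ℕ → List (List Bool)) : ℝ :=
  ⨆ s : ℕ, (listMeasure ((List.range (s + 1)).flatMap g) : ℝ)

/-- A Kurtz test relative to `A`: an `A`-computable sequence of explicitly given
clopen sets, the `m`-th of measure at most `2 ^ (-m)`. -/
def KurtzTestIn (A : Set ℕ) (G : ℕ → List (List Bool)) : Prop :=
  ComputableIn A G ∧ ∀ m, listMeasure (G m) ≤ (1 / 2) ^ m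

/-- A (plain) Kurtz test. -/
def KurtzTest (G : ℕ → List (List Bool)) : Prop :=
  Computable G ∧ ∀ m, listMeasure (G m) ≤ (1 / 2) ^ m

/-- A Schnorr test relative to `A`: an `A`-computable doubly indexed sequence of finite
stages such that the `m`-th effectively open set `⋃ s, ClopSet (g m s)` has measure at
most `2 ^ (-m)`, and this measure is a real computable in `A` uniformly in `m`. -/
def SchnorrTestIn (A : Set ℕ) (g : ℕ → ℕ → List (List Bool)) : Prop :=
  ComputableIn A (fun p : ℕ × ℕ => g p.1 p.2) ∧
  (∀ m, openMeasure (g m) ≤ (1 / 2) ^ m) ∧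
  ∃ q : ℕ × ℕ → ℚ, ComputableIn A q ∧
    ∀ m k, |openMeasure (g m) - (q (m, k) : ℝ)| ≤ (1 / 2) ^ k

/-- A (plain) Schnorr test. -/
def SchnorrTest (g : ℕ → ℕ → List (List Bool)) : Prop :=
  Computable (fun p : ℕ × ℕ => g p.1 p.2) ∧
  (∀ m, openMeasure (g m) ≤ (1 / 2) ^ m) ∧
  ∃ q : ℕ × ℕ → ℚ, Computable q ∧
    ∀ m k, |openMeasure (g m) - (q (m, k) : ℝ)| ≤ (1 / 2) ^ k

/-- `N` is Schnorr null relative to `A`. -/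
def SchnorrNullIn (A : Set ℕ) (N : Set (ℕ → Bool)) : Prop :=
  ∃ g, SchnorrTestIn A g ∧ N ⊆ ⋂ m, OpenSet (g m)

/-- `N` is Schnorr null (unrelativized). -/
def SchnorrNull (N : Set (ℕ → Bool)) : Prop :=
  ∃ g, SchnorrTest g ∧ N ⊆ ⋂ m, OpenSet (g m)

/-- `x ∈ 2^ω` is Schnorr random: it belongs to no Schnorr null set. -/
def SchnorrRandom (x : ℕ → Bool) : Prop := ∀ N, SchnorrNull N → x ∉ N

/-- `A` is Kurtz engulfing: there is an `A`-computable sequence of Kurtz tests relative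
to `A` such that every Kurtz null set is contained in the null set of one of them. -/
def KurtzEngulfing (A : Set ℕ) : Prop :=
  ∃ G : ℕ → ℕ → List (List Bool),
    ComputableIn A (fun p : ℕ × ℕ => G p.1 p.2) ∧
    (∀ i m, listMeasure (G i m) ≤ (1 / 2) ^ m) ∧
    ∀ L, KurtzTest L → ∃ i, (⋂ m, ClopSet (L m)) ⊆ ⋂ m, ClopSet (G i m)

/-- `A` is weakly Kurtz engulfing: there is an `A`-computable sequence of Kurtz tests
relative to `A` such that the union of their null sets contains every computable
element of Cantor space. -/
def WeaklyKurtzEngulfing (A : Set ℕ) : Prop :=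
  ∃ G : ℕ → ℕ → List (List Bool),
    ComputableIn A (fun p : ℕ × ℕ => G p.1 p.2) ∧
    (∀ i m, listMeasure (G i m) ≤ (1 / 2) ^ m) ∧
    ∀ x : ℕ → Bool, Computable x → ∃ i, x ∈ ⋂ m, ClopSet (G i m)

/-- `A` is weakly Schnorr engulfing: some set Schnorr null relative to `A` contains
every computable element of Cantor space. -/
def WeaklySchnorrEngulfing (A : Set ℕ) : Prop :=
  ∃ N, SchnorrNullIn A N ∧ ∀ x : ℕ → Bool, Computable x → x ∈ N

/-! ### DNR and PA degrees -/

/-- The `e`-th partial computable function. -/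
noncomputable def phi (e : ℕ) : ℕ →. ℕ := (Denumerable.ofNat Nat.Partrec.Code e).eval

/-- `h` is diagonally nonrecursive. -/
def DNRFun (h : ℕ → ℕ) : Prop := ∀ e, ∀ y ∈ phi e e, h e ≠ y

/-- `A` is DNR: `A` computes a diagonally nonrecursive function. -/
def DNRDegree (A : Set ℕ) : Prop := ∃ h : ℕ → ℕ, ComputableIn A h ∧ DNRFun h

/-- `A` is PA: `A` computes a `{0,1}`-valued diagonally nonrecursive function. -/
def PA (A : Set ℕ) : Prop :=
  ∃ h : ℕ → ℕ, ComputableIn A h ∧ (∀ e, h e ≤ 1) ∧ DNRFun h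

/-! ### Traces -/

/-- The trace `σ` (satisfying `|σ n| ≤ n`) traces the function `f` if
`f n ∈ σ n` for all but finitely many `n`. -/
def Traces (σ : ℕ → Finset ℕ) (f : ℕ → ℕ) : Prop := ∀ᶠ n in atTop, f n ∈ σ n

/-- `σ` is a `(D, g)`-trace relative to `A`: `D` is infinite and c.e. in `A`, `g` is a
partial `A`-computable function with `D ⊆ dom g` and `g n ≥ n` on its domain, and `σ`
is partial `A`-computable, defined on `D`, with `|σ n| < g n` for all `n ∈ D`. -/
def IsDGTraceIn (A : Set ℕ) (D : Set ℕ) (g : ℕ →. ℕ) (σ : ℕ →. Finset ℕ) : Prop :=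
  D.Infinite ∧ CEIn A D ∧ PartrecIn A g ∧ D ⊆ g.Dom ∧ (∀ n, ∀ y ∈ g n, n ≤ y) ∧
  PartrecIn A σ ∧ D ⊆ σ.Dom ∧ ∀ n ∈ D, ∀ S ∈ σ n, ∀ b ∈ g n, S.card < b

/-- `σ` is a `(D, g)`-trace (unrelativized). -/
def IsDGTrace (D : Set ℕ) (g : ℕ →. ℕ) (σ : ℕ →. Finset ℕ) : Prop :=
  D.Infinite ∧ CE D ∧ Partrec g ∧ D ⊆ g.Dom ∧ (∀ n, ∀ y ∈ g n, n ≤ y) ∧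
  Partrec σ ∧ D ⊆ σ.Dom ∧ ∀ n ∈ D, ∀ S ∈ σ n, ∀ b ∈ g n, S.card < b

/-- The `(D, g)`-trace `σ` traces `f`: `f n ∈ σ n` for all but finitely many `n ∈ D`. -/
def DGTraces (D : Set ℕ) (σ : ℕ →. Finset ℕ) (f : ℕ → ℕ) : Prop :=
  ∀ᶠ n in atTop, n ∈ D → ∀ S ∈ σ n, f n ∈ S

/-!
Hyperimmune-freeness: trace the `A`-computable function `m ↦ ∑_{k ≤ m} f k`. Searching
effectively for some `m ≥ n` in `D` at which the trace converges, and summing the finite set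
found there, gives a computable function that eventually bounds `f n`.

Not DNR: for `k < m * g m` write `k = c * g m + j` with `j < g m`, and let `e (m, k)` be an index
of the constant program that runs the `c`-th partial computable function on `m`, takes the `j`-th
element of the finite set it returns, and outputs the `k`-th entry of that number read as a list.
If `h` is DNR and `F m` encodes the list of the values `h (e (m, k))`, `k < m * g m`, then `F` is
`A`-computable, so it is traced by some `c`-th partial computable `σ`. At a large `m ∈ D`, `F m` is
the `j`-th element of `σ m` for some `j < g m`, so the program `e (m, c * g m + j)` outputs `h`
of its own index, a contradiction.
-/

open Encodable

namespace RecursiveIn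

variable {A : Set ℕ}

theorem of_eq {f g : ℕ →. ℕ} (hf : RecursiveIn A f) (H : ∀ n, f n = g n) : RecursiveIn A g :=
  funext H ▸ hf

theorem of_nat_partrec {f : ℕ →. ℕ} (hf : Nat.Partrec f) : RecursiveIn A f := by
  induction hf with
  | zero => exact .zero
  | succ => exact .succ
  | left => exact .left
  | right => exact .right
  | pair _ _ ihf ihg => exact .pair ihf ihg
  | comp _ _ ihf ihg => exact .comp ihf ihg
  | prec _ _ ihf ihg => exact .prec ihf ihg
  | rfind _ ihf => exact .rfind ihf

theorem of_computable {f : ℕ → ℕ} (hf : Computable f) : RecursiveIn A f :=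
  of_nat_partrec (Partrec.nat_iff.mp hf)

theorem comp_total {f g : ℕ → ℕ} (hf : RecursiveIn A f) (hg : RecursiveIn A g) :
    RecursiveIn A fun n => f (g n) :=
  (hf.comp hg).of_eq fun _ => Part.bind_some _ _

theorem pair_total {f g : ℕ → ℕ} (hf : RecursiveIn A f) (hg : RecursiveIn A g) :
    RecursiveIn A fun n => Nat.pair (f n) (g n) :=
  (hf.pair hg).of_eq fun n => by simp [Seq.seq]

theorem prec_total {f g : ℕ → ℕ} (hf : RecursiveIn A f) (hg : RecursiveIn A g) :
    RecursiveIn A (Nat.unpaired fun a n =>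
      n.rec (f a) fun y i => g (Nat.pair a (Nat.pair y i)) : ℕ → ℕ) :=
  (hf.prec hg).of_eq fun p => by
    simp only [Nat.unpaired, PFun.coe_val]
    induction p.unpair.2 with
    | zero => rfl
    | succ n ih => exact (congrArg (Part.bind · _) ih).trans (Part.bind_some _ _)

theorem encode_map {h : ℕ → ℕ} (hh : RecursiveIn A h) {Q : ℕ → List ℕ} (hQ : Computable Q) :
    RecursiveIn A fun m => encode ((Q m).map h) := by
  set u : ℕ → ℕ := fun z => (Q z.unpair.1).getD z.unpair.2.unpair.1 0
  set C : ℕ → ℕ := fun t =>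
    encode ((decode (α := List ℕ) t.unpair.1.unpair.2.unpair.2).getD [] ++ [t.unpair.2])
  have hu : Computable u :=
    Computable.option_getD
      (Computable.list_getElem?.comp (hQ.comp (Computable.fst.comp Computable.unpair))
        (Computable.fst.comp (Computable.unpair.comp (Computable.snd.comp Computable.unpair))))
      (Computable.const 0)
  have hC : Computable C :=
    Computable.encode.comp (Computable.list_append.comp
      (Computable.option_getD (Computable.decode.comp (Computable.snd.comp (Computable.unpair.comp
        (Computable.snd.comp (Computable.unpair.comp (Computable.fst.comp Computable.unpair))))))
        (Computable.const []))
      (Computable.list_cons.comp (Computable.snd.comp Computable.unpair) (Computable.const [])))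
  have hstep : RecursiveIn A fun z => C (Nat.pair z (h (u z))) :=
    (of_computable hC).comp_total ((of_computable Computable.id).pair_total
      (hh.comp_total (of_computable hu)))
  have hlen : Computable fun m => Nat.pair m (Q m).length :=
    Primrec₂.natPair.to_comp.comp Computable.id (Computable.list_length.comp hQ)
  refine ((prec_total (of_computable (Computable.const (encode ([] : List ℕ)))) hstep).comp_total
    (of_computable hlen)).of_eq fun m => ?_
  have hrec (n : ℕ) : (n.rec (encode ([] : List ℕ)) fun y i =>
      C (Nat.pair (Nat.pair m (Nat.pair y i)) (h (u (Nat.pair m (Nat.pair y i))))) : ℕ) =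
      encode ((List.range n).map fun k => h ((Q m).getD k 0)) := by
    induction n with
    | zero => rfl
    | succ n ih => simp only [ih]; simp [C, u, List.range_succ]
  have hQm : (List.range (Q m).length).map (fun k => h ((Q m).getD k 0)) = (Q m).map h := by
    refine List.ext_getElem (by simp) fun k _ hk => ?_
    rw [List.length_map] at hk
    simp [List.getElem?_eq_getElem hk]
  simp only [Nat.unpaired, Nat.unpair_pair, hrec, hQm]

end RecursiveIn

theorem computableIn_iff_recursiveIn {A : Set ℕ} {f : ℕ → ℕ} :
    ComputableIn A f ↔ RecursiveIn A f := by
  unfold ComputableIn PartrecIn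
  constructor <;> intro h <;> refine h.of_eq fun n => ?_ <;> simp [Part.map_id']

theorem ComputableIn.comp_listMap {A : Set ℕ} {h : ℕ → ℕ} (hh : ComputableIn A h)
    {Q : ℕ → List ℕ} (hQ : Computable Q) {Φ : List ℕ → ℕ} (hΦ : Computable Φ) :
    ComputableIn A fun m => Φ ((Q m).map h) := by
  have hΦ' : Computable fun n => Φ ((decode (α := List ℕ) n).getD []) :=
    hΦ.comp (Computable.option_getD Computable.decode (Computable.const []))
  exact computableIn_iff_recursiveIn.2 <| ((RecursiveIn.of_computable hΦ').comp_total
    ((computableIn_iff_recursiveIn.1 hh).encode_map hQ)).of_eq fun m => by simp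

open Nat.Partrec (Code)
open Nat.Partrec.Code

theorem _root_.Partrec.exists_computable_mem_of_infinite_dom {τ : ℕ →. ℕ} (hτ : Partrec τ)
    (hinf : {m | (τ m).Dom}.Infinite) :
    ∃ G : ℕ → ℕ, Computable G ∧ ∀ n, ∃ m ≥ n, G n ∈ τ m := by
  obtain ⟨c, rfl⟩ := exists_code.mp (Partrec.nat_iff.mp hτ)
  set find : ℕ → ℕ → Option ℕ := fun n k => evaln k.unpair.2 c (n + k.unpair.1)
  have hfind : Computable₂ find := (primrec_evaln.comp
    (((Primrec.snd.comp (Primrec.unpair.comp Primrec.snd)).pair (Primrec.const c)).pair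
      (Primrec.nat_add.comp Primrec.fst
        (Primrec.fst.comp (Primrec.unpair.comp Primrec.snd))))).to_comp
  have hdom (n : ℕ) : (Nat.rfindOpt (find n)).Dom := by
    obtain ⟨m, hm, hnm⟩ := hinf.exists_gt n
    obtain ⟨y, hy⟩ := Part.dom_iff_mem.mp hm
    obtain ⟨s, hs⟩ := evaln_complete.mp hy
    exact Nat.rfindOpt_dom.mpr ⟨Nat.pair (m - n) s, y, by
      simpa [find, show n + (m - n) = m by omega] using hs⟩
  refine ⟨fun n => (Nat.rfindOpt (find n)).get (hdom n),
    (Partrec.rfindOpt hfind).of_eq_tot fun n => Part.get_mem _, fun n => ?_⟩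
  obtain ⟨k, hk⟩ := Nat.rfindOpt_spec (Part.get_mem (hdom n))
  exact ⟨n + k.unpair.1, by omega, evaln_sound hk⟩

theorem _root_.Primrec.list_sum_nat : Primrec (List.sum : List ℕ → ℕ) :=
  (Primrec.list_foldr Primrec.id (Primrec.const 0)
    (Primrec.nat_add.comp (Primrec.fst.comp Primrec.snd) (Primrec.snd.comp Primrec.snd)).to₂
    ).of_eq fun l => by simp [List.sum_eq_foldr]

theorem _root_.Denumerable.primrec₂_raise' : Primrec₂ Denumerable.raise' := by
  have hk : Primrec fun s : (List ℕ × ℕ) × ℕ => s.2 + s.1.2 :=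
    Primrec.nat_add.comp Primrec.snd (Primrec.snd.comp Primrec.fst)
  have hstep : Primrec₂ fun (_ : List ℕ × ℕ) (s : (List ℕ × ℕ) × ℕ) =>
      (s.1.1 ++ [s.2 + s.1.2], s.2 + s.1.2 + 1) :=
    ((Primrec.list_concat.comp (Primrec.fst.comp Primrec.fst) hk).pair
      (Primrec.succ.comp hk)).comp Primrec.snd
  have hfold (l acc : List ℕ) (n : ℕ) :
      (l.foldl (fun s m => (s.1 ++ [m + s.2], m + s.2 + 1)) (acc, n)).1 =
        acc ++ Denumerable.raise' l n := by
    induction l generalizing acc n with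
    | nil => simp [Denumerable.raise']
    | cons m l ih => simp [Denumerable.raise', ih]
  exact (Primrec.fst.comp (Primrec.list_foldl Primrec.fst
    ((Primrec.const []).pair Primrec.snd) hstep)).of_eq fun p => by simpa using hfold p.1 [] p.2

open Denumerable in
theorem _root_.Primrec.finset_sort_nat : Primrec fun S : Finset ℕ => S.sort (· ≤ ·) := by
  refine (primrec₂_raise'.comp ((Primrec.ofNat (List ℕ)).comp Primrec.encode)
    (Primrec.const 0)).of_eq fun S => ?_
  have hmap (T : Finset ℕ) : T.map (eqv ℕ).symm.toEmbedding = T := by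
    ext; simp [eqv]
  conv_rhs => rw [← ofNat_encode S]
  show _ = ((Finset.map _ (raise'Finset _ 0)).sort (· ≤ ·))
  rw [hmap]
  simp [raise'Finset, Finset.sort, List.mergeSort_eq_self _ (raise'_sorted _ _).sortedLE.pairwise]

theorem DGTraces.exists_computable_ge {D : Set ℕ} {σ : ℕ →. Finset ℕ} {F : ℕ → ℕ}
    (htr : DGTraces D σ F) (hD : D.Infinite) (hDce : CE D) (hσ : Partrec σ) (hdom : D ⊆ σ.Dom) :
    ∃ G : ℕ → ℕ, Computable G ∧ ∀ᶠ n in atTop, ∃ m ≥ n, F m ≤ G n := by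
  obtain ⟨p, hp, hpD⟩ := hDce
  set bound : Finset ℕ → ℕ := fun S => (S.sort (· ≤ ·)).sum
  have hbound : Computable bound := (Primrec.list_sum_nat.comp Primrec.finset_sort_nat).to_comp
  set τ : ℕ →. ℕ := fun m => (p m).bind fun _ => (σ m).map bound
  have hτ : Partrec τ := hp.bind ((hσ.comp Computable.fst).map (hbound.comp Computable.snd).to₂)
  have hτD : {m | (τ m).Dom} = D := by
    ext m
    show (τ m).Dom ↔ m ∈ D
    simp only [τ, Part.bind_dom, Part.map_Dom]
    exact ⟨fun ⟨hm, _⟩ => hpD m |>.2 hm, fun hm => ⟨(hpD m).1 hm, hdom hm⟩⟩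
  obtain ⟨G, hG, hGτ⟩ := hτ.exists_computable_mem_of_infinite_dom (hτD ▸ hD)
  obtain ⟨N, hN⟩ := eventually_atTop.mp htr
  refine ⟨G, hG, eventually_atTop.mpr ⟨N, fun n hn => ?_⟩⟩
  obtain ⟨m, hmn, hm⟩ := hGτ n
  obtain ⟨a, hpm, hσm⟩ := Part.mem_bind_iff.mp hm
  obtain ⟨S, hS, hSG⟩ := (Part.mem_map_iff _).mp hσm
  have hmD : m ∈ D := (hpD m).2 (Part.dom_iff_mem.mpr ⟨a, hpm⟩)
  exact ⟨m, hmn, hSG ▸ List.le_sum_of_mem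
    ((Finset.mem_sort _).2 (hN m (hn.trans hmn) hmD S hS))⟩

theorem exists_primrec_phi_eq {α : Type} [Primcodable α] {ψ : α →. ℕ} (hψ : Partrec ψ) :
    ∃ e : α → ℕ, Primrec e ∧ ∀ a x, phi (e a) x = ψ a := by
  have hψ' : Partrec fun z : ℕ => (decode (α := α) z.unpair.1 : Part α).bind ψ :=
    (Computable.ofOption (Computable.decode.comp (Computable.fst.comp Computable.unpair))).bind
      (hψ.comp Computable.snd)
  obtain ⟨u, hu⟩ := exists_code.mp (Partrec.nat_iff.mp hψ')
  refine ⟨fun a => encode (u.curry (encode a)),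
    Primrec.encode.comp (primrec₂_curry.comp (Primrec.const u) Primrec.encode),
    fun a x => ?_⟩
  simp only [phi, Denumerable.ofNat_encode, eval_curry, hu, Nat.unpair_pair, encodek]
  exact Part.bind_some _ _

def traceEntry (g : ℕ → ℕ) (p : ℕ × ℕ) : Part ℕ :=
  ((Denumerable.ofNat Code (p.2 / g p.1)).eval p.1).bind fun s =>
    ((((Denumerable.ofNat (Finset ℕ) s).sort (· ≤ ·))[p.2 % g p.1]?.bind
      (decode (α := List ℕ))).bind (·[p.2]?) : Option ℕ)

theorem partrec_traceEntry {g : ℕ → ℕ} (hg : Computable g) : Partrec (traceEntry g) := by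
  have hdiv : Computable fun p : ℕ × ℕ => p.2 / g p.1 :=
    Primrec.nat_div.to_comp.comp Computable.snd (hg.comp Computable.fst)
  have hmod : Computable fun p : ℕ × ℕ => p.2 % g p.1 :=
    Primrec.nat_mod.to_comp.comp Computable.snd (hg.comp Computable.fst)
  have hsort : Computable fun s => (Denumerable.ofNat (Finset ℕ) s).sort (· ≤ ·) :=
    Primrec.finset_sort_nat.to_comp.comp (Computable.ofNat _)
  have hread : Computable fun q : (ℕ × ℕ) × ℕ =>
      ((((Denumerable.ofNat (Finset ℕ) q.2).sort (· ≤ ·))[q.1.2 % g q.1.1]?.bind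
        (decode (α := List ℕ))).bind (·[q.1.2]?)) :=
    Computable.option_bind (Computable.option_bind
      (Computable.list_getElem?.comp (hsort.comp Computable.snd) (hmod.comp Computable.fst))
      (Computable.decode.comp Computable.snd).to₂)
      (Computable.list_getElem?.comp Computable.snd
        (Computable.snd.comp (Computable.fst.comp Computable.fst))).to₂
  exact (eval_part.comp ((Computable.ofNat Code).comp hdiv) Computable.fst).bind
    (Computable.ofOption hread).to₂

theorem traceEntry_encode_mul_add {g : ℕ → ℕ} {c : Code} {m j : ℕ} {S : Finset ℕ} {L : List ℕ}
    (hS : S ∈ (c.eval m).map (Denumerable.ofNat (Finset ℕ))) (hj : j < g m)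
    (hL : (S.sort (· ≤ ·))[j]? = some (encode L)) :
    traceEntry g (m, encode c * g m + j) = L[encode c * g m + j]? := by
  have hg : 0 < g m := by omega
  have hdiv : (encode c * g m + j) / g m = encode c := by
    rw [Nat.add_comm, Nat.mul_comm, Nat.add_mul_div_left _ _ hg, Nat.div_eq_of_lt hj,
      Nat.zero_add]
  have hmod : (encode c * g m + j) % g m = j := by
    rw [Nat.add_comm, Nat.mul_comm, Nat.add_mul_mod_self_left, Nat.mod_eq_of_lt hj]
  obtain ⟨s, hs, rfl⟩ := (Part.mem_map_iff _).mp hS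
  rw [traceEntry, hdiv, hmod, Denumerable.ofNat_encode, Part.eq_some_iff.mpr hs]
  simp [hL]

theorem DNRFun.not_dgTraces {h : ℕ → ℕ} (hh : DNRFun h) {g : ℕ → ℕ} {e : ℕ × ℕ → ℕ}
    (he : ∀ p x, phi (e p) x = traceEntry g p) {D : Set ℕ} {σ : ℕ →. Finset ℕ}
    (hD : D.Infinite) (hσ : Partrec σ) (hdom : D ⊆ σ.Dom)
    (hcard : ∀ n ∈ D, ∀ S ∈ σ n, S.card < g n) :
    ¬ DGTraces D σ fun m => encode (((List.range (m * g m)).map fun k => e (m, k)).map h) := by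
  intro htr
  obtain ⟨c, hc⟩ := exists_code.mp
    (Partrec.nat_iff.mp (hσ.map (Computable.encode.comp Computable.snd).to₂))
  obtain ⟨N, hN⟩ := eventually_atTop.mp htr
  obtain ⟨m, hmD, hm⟩ := hD.exists_gt (max (encode c) N)
  obtain ⟨S, hS⟩ := Part.dom_iff_mem.mp (hdom hmD)
  set L := ((List.range (m * g m)).map fun k => e (m, k)).map h
  obtain ⟨j, hj, hjL⟩ := List.getElem_of_mem ((Finset.mem_sort (α := ℕ) (· ≤ ·)).2
    (hN m (le_of_max_le_right hm.le) hmD S hS))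
  have hjg : j < g m := (Finset.length_sort (α := ℕ) (· ≤ ·) ▸ hj).trans (hcard m hmD S hS)
  set k := encode c * g m + j
  have hk : k < m * g m := calc
    k < (encode c + 1) * g m := by rw [Nat.succ_mul]; omega
    _ ≤ m * g m := Nat.mul_le_mul_right _ (by omega)
  have hSc : S ∈ (c.eval m).map (Denumerable.ofNat (Finset ℕ)) := by
    rw [hc]; simpa using hS
  have hdiag := he (m, k) (e (m, k))
  have hLk : L[k]? = some (h (e (m, k))) := by simp [L, hk]
  rw [traceEntry_encode_mul_add hSc hjg (List.getElem?_eq_some_iff.2 ⟨hj, hjL⟩), hLk] at hdiag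
  exact hh (e (m, k)) _ (hdiag ▸ Part.mem_some _) rfl

theorem stmt10_general (A : Set ℕ) (g : ℕ → ℕ) (hg : Computable g)
    (htr : ∀ f : ℕ → ℕ, ComputableIn A f →
      ∃ (D : Set ℕ) (σ : ℕ →. Finset ℕ), IsDGTrace D ↑g σ ∧ DGTraces D σ f) :
    HyperimmuneFree A ∧ ¬ DNRDegree A := by
  constructor
  · intro f hf
    obtain ⟨D, σ, ⟨hD, hDce, -, -, -, hσ, hdom, -⟩, htrF⟩ :=
      htr _ (hf.comp_listMap (Q := fun m => List.range (m + 1))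
        (Primrec.list_range.comp Primrec.succ).to_comp Primrec.list_sum_nat.to_comp)
    obtain ⟨G, hG, hFG⟩ := htrF.exists_computable_ge hD hDce hσ hdom
    refine ⟨G, hG, hFG.mono fun n ⟨m, hmn, hm⟩ => le_trans ?_ hm⟩
    exact List.le_sum_of_mem (List.mem_map_of_mem (List.mem_range.2 (by omega)))
  · rintro ⟨h, hA, hdnr⟩
    obtain ⟨e, he, hphi⟩ := exists_primrec_phi_eq (partrec_traceEntry hg)
    have hQ : Computable fun m => (List.range (m * g m)).map fun k => e (m, k) :=
      (Primrec.list_map (Primrec.list_range.comp Primrec.snd)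
        (he.comp ((Primrec.fst.comp Primrec.fst).pair Primrec.snd)).to₂).to_comp.comp
        (Computable.id.pair (Primrec.nat_mul.to_comp.comp Computable.id hg))
    obtain ⟨D, σ, ⟨hD, -, -, -, -, hσ, hdom, hcard⟩, htrF⟩ :=
      htr _ (hA.comp_listMap hQ Computable.encode)
    exact hdnr.not_dgTraces hphi hD hσ hdom
      (fun n hn S hS => hcard n hn S hS _ (Part.mem_some _)) htrF

/-- if there is a total computable `g` (with `g n ≥ n`) such that every
`f ≤_T A` is traced by some `(D, g)`-trace, then `A` is of hyperimmune-free degree and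
`A` is not DNR. -/
theorem stmt10 (A : Set ℕ) (g : ℕ → ℕ) (hg : Computable g) (hgid : ∀ n, n ≤ g n)
    (htr : ∀ f : ℕ → ℕ, ComputableIn A f →
      ∃ (D : Set ℕ) (σ : ℕ →. Finset ℕ), IsDGTrace D ↑g σ ∧ DGTraces D σ f) :
    HyperimmuneFree A ∧ ¬ DNRDegree A :=
  stmt10_general A g hg htr

end CichonAnalog
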